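/- (Cofinality of weak βΩ head normal forms.) For every closed λ-term M there exists a term N in weak βΩ head normal form such that M →*wβΩ N. -/

import Mathlib

/-- Untyped λ-terms in de Bruijn representation. -/
inductive Lam : Type
  | var : ℕ → Lam
  | app : Lam → Lam → Lam
  | lam : Lam → Lam
deriving DecidableEq

namespace Lam

/-- Lift (shift) the free variables ≥ d by one. -/
def lift : ℕ → Lam → Lam
  | d, var n => if n < d then var n else var (n + 1)
  | d, app M N => app (lift d M) (lift d N)
  | d, lam M => lam (lift (d + 1) M)

/-- Capture-avoiding substitution of N for the free variable k. -/
def subst : ℕ → Lam → Lam → Lam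
  | k, N, var n => if n = k then N else if k < n then var (n - 1) else var n
  | k, N, app A B => app (subst k N A) (subst k N B)
  | k, N, lam M => lam (subst (k + 1) (lift 0 N) M)

/-- All free variables are < k. -/
def ClosedUnder : ℕ → Lam → Prop
  | k, var n => n < k
  | k, app A B => ClosedUnder k A ∧ ClosedUnder k B
  | k, lam M => ClosedUnder (k + 1) M

/-- A term is closed if it has no free variables. -/
def Closed (M : Lam) : Prop := ClosedUnder 0 M

/-- x occurs free in the term. -/
def FreeIn : ℕ → Lam → Prop
  | x, var n => n = x
  | x, app A B => FreeIn x A ∨ FreeIn x B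
  | x, lam M => FreeIn (x + 1) M

/-- The minimal number of abstractions needed to close the term. -/
def fvBound : Lam → ℕ
  | var n => n + 1
  | app A B => max (fvBound A) (fvBound B)
  | lam M => fvBound M - 1

/-- Iterated abstraction λz₁…zₙ.M. -/
def absN : ℕ → Lam → Lam
  | 0, M => M
  | n + 1, M => lam (absN n M)

/-- The λ-closure of a term: abstraction over all its free variables. -/
def close (M : Lam) : Lam := absN (fvBound M) M

/-- One-step β-reduction (closed under arbitrary contexts). -/
inductive Beta : Lam → Lam → Prop
  | beta (U V) : Beta (app (lam U) V) (subst 0 V U)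
  | appL {M M'} (N) : Beta M M' → Beta (app M N) (app M' N)
  | appR (M) {N N'} : Beta N N' → Beta (app M N) (app M N')
  | lam {M M'} : Beta M M' → Beta (lam M) (lam M')

/-- Many-step β-reduction. -/
def BetaStar : Lam → Lam → Prop := Relation.ReflTransGen Beta

/-- β-conversion. -/
def BetaConv : Lam → Lam → Prop := Relation.EqvGen Beta

def iComb : Lam := lam (var 0)
def omegaComb : Lam := lam (app (var 0) (var 0))
def Omega : Lam := app omegaComb omegaComb
def Kstar : Lam := lam (lam (var 0))

/-- Apply a term to a list of arguments: M N₁ ⋯ Nₖ. -/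
def appList : Lam → List Lam → Lam
  | M, [] => M
  | M, N :: Ns => appList (app M N) Ns

/-- A term is solvable iff its λ-closure applied to some closed terms β-converts to I. -/
def Solvable (M : Lam) : Prop :=
  ∃ Ns : List Lam, (∀ N ∈ Ns, Closed N) ∧ BetaConv (appList (close M) Ns) iComb

/-- One-step weak βΩ-reduction. -/
inductive WBO : Lam → Lam → Prop
  | wbeta (U V) : Closed (app (lam U) V) → WBO (app (lam U) V) (subst 0 V U)
  | womega (M) : Closed M → ¬ Solvable M → M ≠ Omega → WBO M Omega
  | appL {M M'} (N) : WBO M M' → WBO (app M N) (app M' N)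
  | appR (M) {N N'} : WBO N N' → WBO (app M N) (app M N')
  | lam {M M'} : WBO M M' → WBO (lam M) (lam M')

/-- Many-step weak βΩ-reduction. -/
def WBOStar : Lam → Lam → Prop := Relation.ReflTransGen WBO

/-- Weak βΩ-conversion. -/
def WBOConv : Lam → Lam → Prop := Relation.EqvGen WBO

/-- One-step full βΩ-reduction (Ω-contraction allowed on open terms,
unsolvability referring to the λ-closure). -/
inductive BO : Lam → Lam → Prop
  | beta (U V) : BO (app (lam U) V) (subst 0 V U)
  | omega (M) : ¬ Solvable M → M ≠ Omega → BO M Omega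
  | appL {M M'} (N) : BO M M' → BO (app M N) (app M' N)
  | appR (M) {N N'} : BO N N' → BO (app M N) (app M N')
  | lam {M M'} : BO M M' → BO (lam M) (lam M')

/-- Many-step full βΩ-reduction. -/
def BOStar : Lam → Lam → Prop := Relation.ReflTransGen BO

/-- Full βΩ-conversion. -/
def BOConv : Lam → Lam → Prop := Relation.EqvGen BO

/-- A term is in βΩ-normal form iff it admits no βΩ-reduction, i.e. it contains
no β-redex and no unsolvable subterm other than Ω. -/
def BONormal (M : Lam) : Prop := ∀ N, ¬ BO M N

/-- Head weak β-reduction: contraction of the head redex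
λx₁…xₙ.(λx.U)V M₁⋯Mₖ → λx₁…xₙ.([V/x]U)M₁⋯Mₖ with (λx.U)V closed. -/
inductive HeadWBeta : Lam → Lam → Prop
  | head (U V) : Closed (app (lam U) V) → HeadWBeta (app (lam U) V) (subst 0 V U)
  | app {M M'} (N) : (∀ U, M ≠ lam U) → HeadWBeta M M' → HeadWBeta (app M N) (app M' N)
  | lam {M M'} : HeadWBeta M M' → HeadWBeta (lam M) (lam M')

/-- The head variable of the term is the free variable x,
i.e. the term has the form λy₁…yᵣ. x X₁ ⋯ Xₘ. -/
inductive HeadVar : ℕ → Lam → Prop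
  | var (x) : HeadVar x (var x)
  | app {x M} (N) : (∀ U, M ≠ lam U) → HeadVar x M → HeadVar x (app M N)
  | lam {x M} : HeadVar (x + 1) M → HeadVar x (lam M)

/-- Subterm relation. -/
inductive Subterm : Lam → Lam → Prop
  | refl (M) : Subterm M M
  | appL {S M} (N) : Subterm S M → Subterm S (app M N)
  | appR (M) {S N} : Subterm S N → Subterm S (app M N)
  | lam {S M} : Subterm S M → Subterm S (lam M)

/-- A closed term is in weak βΩ head normal form iff it is unsolvable and equal
to Ω, or solvable and without a head weak β-redex. -/
def WHnf (M : Lam) : Prop :=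
  (¬ Solvable M ∧ M = Omega) ∨ (Solvable M ∧ ∀ N, ¬ HeadWBeta M N)

/-- Equality in the theory Hω. -/
inductive HOmega : Lam → Lam → Prop
  | refl (M) : Closed M → HOmega M M
  | wbetaL (U N) : Closed (app (lam U) N) → HOmega (app (lam U) N) (subst 0 N U)
  | wbetaR (U N) : Closed (app (lam U) N) → HOmega (subst 0 N U) (app (lam U) N)
  | unsolvL (M) : Closed M → ¬ Solvable M → HOmega M Omega
  | unsolvR (M) : Closed M → ¬ Solvable M → HOmega Omega M
  | leibnitz (X Y M N) : ClosedUnder 1 X → ClosedUnder 1 Y → Closed M → Closed N →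
      HOmega (subst 0 M X) (subst 0 M Y) → HOmega M N →
      HOmega (subst 0 N X) (subst 0 N Y)
  | omega_rule (P Q) : Closed P → Closed Q →
      (∀ M, Closed M → HOmega (app P M) (app Q M)) → HOmega P Q

/-- The n-fold application fⁿ z in the Church numeral. -/
def churchBody : ℕ → Lam
  | 0 => var 0
  | n + 1 => app (var 1) (churchBody n)

/-- The n-th Church numeral. -/
def church (n : ℕ) : Lam := lam (lam (churchBody n))


-- ### Part A: substitution lemmas

theorem cu_mono {k j : ℕ} {M : Lam} (h : ClosedUnder k M) (hkj : k ≤ j) :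
    ClosedUnder j M := by
  induction M generalizing k j with
  | var n => exact lt_of_lt_of_le h hkj
  | app A B ihA ihB => exact ⟨ihA h.1 hkj, ihB h.2 hkj⟩
  | lam M ih =>
    exact ih (show ClosedUnder (k + 1) M from h) (Nat.succ_le_succ hkj)

theorem cu_lift {k : ℕ} {N : Lam} (h : ClosedUnder k N) (d : ℕ) :
    ClosedUnder (k + 1) (lift d N) := by
  induction N generalizing k d with
  | var n =>
    have : n < k := h
    simp only [lift]
    split <;> (show _ < _ ; omega)
  | app A B ihA ihB => exact ⟨ihA h.1 d, ihB h.2 d⟩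
  | lam M ih => exact ih (show ClosedUnder (k + 1) M from h) (d + 1)

theorem lift_of_cu {k d : ℕ} {M : Lam} (h : ClosedUnder k M) (hkd : k ≤ d) :
    lift d M = M := by
  induction M generalizing k d with
  | var n =>
    have : n < k := h
    simp only [lift]
    rw [if_pos (by omega)]
  | app A B ihA ihB => simp only [lift]; rw [ihA h.1 hkd, ihB h.2 hkd]
  | lam M ih =>
    simp only [lift]
    rw [ih (show ClosedUnder (k + 1) M from h) (Nat.succ_le_succ hkd)]

theorem subst_of_cu {k d : ℕ} {N M : Lam} (h : ClosedUnder k M) (hkd : k ≤ d) :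
    subst d N M = M := by
  induction M generalizing k d N with
  | var n =>
    have : n < k := h
    simp only [subst]
    rw [if_neg (by omega), if_neg (by omega)]
  | app A B ihA ihB => simp only [subst]; rw [ihA h.1 hkd, ihB h.2 hkd]
  | lam M ih =>
    simp only [subst]
    rw [ih (show ClosedUnder (k + 1) M from h) (Nat.succ_le_succ hkd)]

theorem lift_closed {N : Lam} (h : Closed N) (d : ℕ) : lift d N = N :=
  lift_of_cu h (Nat.zero_le d)

theorem subst_closed {N M : Lam} (h : Closed M) (k : ℕ) : subst k N M = M :=
  subst_of_cu h (Nat.zero_le k)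

theorem cu_subst {m k : ℕ} {M N : Lam} (hk : k ≤ m) (hM : ClosedUnder (m + 1) M)
    (hN : ClosedUnder m N) : ClosedUnder m (subst k N M) := by
  induction M generalizing m k N with
  | var n =>
    have : n < m + 1 := hM
    simp only [subst]
    split
    · exact hN
    · split <;> (show _ < _ ; omega)
  | app A B ihA ihB => exact ⟨ihA hk hM.1 hN, ihB hk hM.2 hN⟩
  | lam M ih =>
    exact ih (Nat.succ_le_succ hk) (show ClosedUnder (m + 1 + 1) M from hM)
      (cu_lift hN 0)

/-- lift/subst commutation, for closed N. -/
theorem lift_subst {d k : ℕ} {N : Lam} (hN : Closed N) (M : Lam) (hdk : d ≤ k) :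
    lift d (subst k N M) = subst (k + 1) N (lift d M) := by
  induction M generalizing d k with
  | var n =>
    simp only [subst, lift]
    split_ifs <;>
      first
        | (exfalso; omega)
        | rfl
        | (simp only [subst, lift, subst_closed hN, lift_closed hN];
           try (split_ifs <;> first | (exfalso; omega) | rfl | (congr 1; omega));
           try rfl)
  | app A B ihA ihB => simp only [subst, lift]; rw [ihA hdk, ihB hdk]
  | lam M ih =>
    simp only [subst, lift, lift_closed hN]
    rw [ih (Nat.succ_le_succ hdk)]

/-- Substitution composition, for closed N. -/
theorem subst_subst {j k : ℕ} {N : Lam} (hN : Closed N) (V U : Lam) (hjk : j ≤ k) :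
    subst k N (subst j V U) = subst j (subst k N V) (subst (k + 1) N U) := by
  induction U generalizing j k V with
  | var n =>
    simp only [subst]
    split_ifs <;>
      first
        | (exfalso; omega)
        | rfl
        | (simp only [subst, lift, subst_closed hN, lift_closed hN];
           try (split_ifs <;> first | (exfalso; omega) | rfl | (congr 1; omega));
           try rfl)
  | app A B ihA ihB => simp only [subst]; rw [ihA V hjk, ihB V hjk]
  | lam M ih =>
    simp only [subst, lift_closed hN]
    rw [ih (lift 0 V) (Nat.succ_le_succ hjk), ← lift_subst hN V (Nat.zero_le k)]

/-- Commutation of substitutions of closed terms. -/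
theorem subst_comm {j k : ℕ} {N P : Lam} (hN : Closed N) (hP : Closed P) (U : Lam)
    (hjk : j ≤ k) :
    subst j N (subst (k + 1) P U) = subst k P (subst j N U) := by
  induction U generalizing j k with
  | var n =>
    simp only [subst]
    split_ifs <;>
      first
        | (exfalso; omega)
        | rfl
        | (simp only [subst, lift, subst_closed hN, subst_closed hP, lift_closed hN, lift_closed hP];
           try (split_ifs <;> first | (exfalso; omega) | rfl | (congr 1; omega));
           try rfl)
  | app A B ihA ihB => simp only [subst]; rw [ihA hjk, ihB hjk]
  | lam M ih =>
    simp only [subst, lift_closed hN, lift_closed hP]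
    rw [ih (Nat.succ_le_succ hjk)]
-- ### Part B: head reduction and head normalization

/-- Unrestricted head reduction. -/
inductive HeadStep : Lam → Lam → Prop
  | head (U V) : HeadStep (app (lam U) V) (subst 0 V U)
  | app {M M'} (N) : (∀ U, M ≠ lam U) → HeadStep M M' → HeadStep (app M N) (app M' N)
  | lam {M M'} : HeadStep M M' → HeadStep (lam M) (lam M')

theorem headStep_det {M N P : Lam} (h1 : HeadStep M N) (h2 : HeadStep M P) : N = P := by
  induction h1 generalizing P with
  | head U V =>
    cases h2 with
    | head => rfl
    | app N hne hs => exact absurd rfl (hne _)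
  | app N hne hs ih =>
    cases h2 with
    | head U V => exact absurd rfl (hne _)
    | app _ _ hs2 => rw [ih hs2]
  | lam hs ih =>
    cases h2 with
    | lam hs2 => rw [ih hs2]

theorem headStep_var {n : ℕ} {P : Lam} : ¬ HeadStep (var n) P := by
  intro h; cases h

theorem headStep_shape {M M' : Lam} (h : HeadStep M M') (hnl : ∀ U, M ≠ lam U) :
    ∃ A B, M = app A B := by
  cases h with
  | head U V => exact ⟨_, _, rfl⟩
  | app N hne hs => exact ⟨_, _, rfl⟩
  | lam hs => exact absurd rfl (hnl _)

/-- Head reduction is preserved by substitution of a closed term. -/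
theorem headStep_subst {M M' : Lam} {N : Lam} (hN : Closed N) (k : ℕ)
    (h : HeadStep M M') : HeadStep (subst k N M) (subst k N M') := by
  induction h generalizing k with
  | head U V =>
    have : subst k N (subst 0 V U)
        = subst 0 (subst k N V) (subst (k + 1) N U) :=
      subst_subst hN V U (Nat.zero_le k)
    rw [this]
    have : subst k N (app (lam U) V)
        = app (lam (subst (k + 1) N U)) (subst k N V) := by
      simp only [subst, lift_closed hN]
    rw [this]
    exact HeadStep.head _ _
  | @app P P' Q hne hs ih =>
    obtain ⟨A, B, rfl⟩ := headStep_shape hs hne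
    exact HeadStep.app _ (by simp only [subst]; exact fun U h => Lam.noConfusion h)
      (ih k)
  | lam hs ih =>
    simp only [subst, lift_closed hN]
    exact HeadStep.lam (ih (k + 1))

/-- Head normalization: the head reduction starting at M terminates. -/
def HN (M : Lam) : Prop := Acc (fun a b => HeadStep b a) M

theorem hn_expand {M M' : Lam} (h : HeadStep M M') (hM' : HN M') : HN M :=
  Acc.intro M fun y hy => (headStep_det h hy) ▸ hM'

theorem hn_lam {M : Lam} (h : HN M) : HN (lam M) := by
  induction h with
  | intro X hX ih =>
    refine Acc.intro _ fun Y hY => ?_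
    cases hY with
    | lam hs => exact ih _ hs

theorem hn_lam_inv {M : Lam} (h : HN (lam M)) : HN M := by
  generalize hX : lam M = X at h
  induction h generalizing M with
  | intro X hX2 ih =>
    subst hX
    exact Acc.intro _ fun Y hY => ih _ (HeadStep.lam hY) rfl

theorem hn_subst {N : Lam} (hN : Closed N) {U : Lam} (h : HN (subst 0 N U)) :
    HN U := by
  generalize hX : subst 0 N U = X at h
  induction h generalizing U with
  | intro X hX2 ih =>
    subst hX
    exact Acc.intro _ fun Y hY => ih _ (headStep_subst hN 0 hY) rfl

theorem hn_app {M N : Lam} (hN : Closed N) (h : HN (app M N)) : HN M := by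
  generalize hX : app M N = X at h
  induction h generalizing M N with
  | intro X hX2 ih =>
    subst hX
    by_cases hl : ∃ U, M = lam U
    · obtain ⟨U, rfl⟩ := hl
      have h1 : HN (subst 0 N U) := hX2 _ (HeadStep.head U N)
      exact hn_lam (hn_subst hN h1)
    · push_neg at hl
      refine Acc.intro _ fun M' hM' => ?_
      exact ih _ (HeadStep.app N hl hM') hN rfl

theorem not_hn_of_loop {M : Lam} (h : HeadStep M M) : ¬ HN M := by
  intro hM
  induction hM with
  | intro X hX ih => exact ih X h h

theorem headStep_omega : HeadStep Omega Omega := by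
  have : Omega = subst 0 omegaComb (app (var 0) (var 0)) := by
    simp [Omega, subst]
  nth_rewrite 2 [this]
  exact HeadStep.head _ _

theorem hn_iComb : HN iComb := by
  refine Acc.intro _ fun Y hY => ?_
  cases hY with
  | lam hs => cases hs
-- ### Part C: intersection types

inductive Ty : Type
  | base : Ty
  | arr : List Ty → Ty → Ty

abbrev Ctx := ℕ → List Ty

def consC (As : List Ty) (Γ : Ctx) : Ctx := fun n =>
  match n with
  | 0 => As
  | n + 1 => Γ n

def insertAtC (d : ℕ) (Bs : List Ty) (Γ : Ctx) : Ctx :=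
  fun n => if n < d then Γ n else if n = d then Bs else Γ (n - 1)

theorem insertAtC_zero (Bs : List Ty) (Γ : Ctx) : insertAtC 0 Bs Γ = consC Bs Γ := by
  funext n
  cases n with
  | zero => simp [insertAtC, consC]
  | succ n => simp [insertAtC, consC]

theorem consC_insertAtC (As Bs : List Ty) (Γ : Ctx) (d : ℕ) :
    consC As (insertAtC d Bs Γ) = insertAtC (d + 1) Bs (consC As Γ) := by
  funext n
  cases n with
  | zero => simp [insertAtC, consC]
  | succ n =>
    simp only [insertAtC, consC]
    rcases Nat.lt_trichotomy n d with h | h | h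
    · rw [if_pos h, if_pos (by omega)]
    · subst h
      rw [if_neg (by omega), if_pos rfl, if_neg (by omega), if_pos rfl]
    · rw [if_neg (by omega), if_neg (by omega), if_neg (by omega), if_neg (by omega)]
      have : n - 1 + 1 = n := by omega
      simp only [Nat.add_sub_cancel]
      cases hn : n with
      | zero => omega
      | succ m => simp [consC]

theorem insertAtC_lt {d n : ℕ} (Bs : List Ty) (Γ : Ctx) (h : n < d) :
    insertAtC d Bs Γ n = Γ n := by simp [insertAtC, h]

theorem insertAtC_self (d : ℕ) (Bs : List Ty) (Γ : Ctx) :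
    insertAtC d Bs Γ d = Bs := by simp [insertAtC]

theorem insertAtC_gt {d n : ℕ} (Bs : List Ty) (Γ : Ctx) (h : d < n) :
    insertAtC d Bs Γ n = Γ (n - 1) := by
  simp only [insertAtC]
  rw [if_neg (by omega), if_neg (by omega)]

inductive Typ : Ctx → Lam → Ty → Prop
  | var {Γ : Ctx} {n A} : A ∈ Γ n → Typ Γ (var n) A
  | app {Γ : Ctx} {M N As B} : Typ Γ M (Ty.arr As B) → (∀ A ∈ As, Typ Γ N A) →
      Typ Γ (app M N) B
  | lam {Γ : Ctx} {M As B} : Typ (consC As Γ) M B → Typ Γ (lam M) (Ty.arr As B)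

theorem typ_mono {Γ Δ : Ctx} {M A} (hsub : ∀ n, Γ n ⊆ Δ n) (h : Typ Γ M A) :
    Typ Δ M A := by
  induction h generalizing Δ with
  | var hmem => exact Typ.var (hsub _ hmem)
  | app hM hN ihM ihN => exact Typ.app (ihM hsub) fun A hA => ihN A hA hsub
  | lam hM ih =>
    refine Typ.lam (ih fun n => ?_)
    cases n with
    | zero => exact fun a ha => ha
    | succ n => exact hsub n

theorem typ_lift {Γ : Ctx} {M A} (h : Typ Γ M A) (d : ℕ) (Bs : List Ty) :
    Typ (insertAtC d Bs Γ) (lift d M) A := by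
  induction h generalizing d with
  | @var Γ n A hmem =>
    simp only [lift]
    split_ifs with hc
    · exact Typ.var (by simp only [insertAtC, if_pos hc]; exact hmem)
    · refine Typ.var ?_
      rw [insertAtC_gt Bs Γ (by omega)]
      simpa using hmem
  | app hM hN ihM ihN =>
    exact Typ.app (ihM d) fun A hA => ihN A hA d
  | lam hM ih =>
    simp only [lift]
    refine Typ.lam ?_
    rw [consC_insertAtC]
    exact ih (d + 1)

theorem typ_anti_lift {Γ : Ctx} {M A} {d : ℕ} {Bs : List Ty}
    (h : Typ (insertAtC d Bs Γ) (lift d M) A) : Typ Γ M A := by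
  induction M generalizing Γ A d with
  | var n =>
    simp only [lift] at h
    split_ifs at h with hc
    · cases h with
      | var hmem =>
        refine Typ.var ?_
        simpa only [insertAtC, if_pos hc] using hmem
    · cases h with
      | var hmem =>
        refine Typ.var ?_
        simp only [insertAtC] at hmem
        rw [if_neg (by omega), if_neg (by omega)] at hmem
        simpa using hmem
  | app P Q ihP ihQ =>
    simp only [lift] at h
    cases h with
    | app hM hN => exact Typ.app (ihP hM) fun A hA => ihQ (hN A hA)
  | lam P ih =>
    simp only [lift] at h
    cases h with
    | lam hM =>
      rw [consC_insertAtC] at hM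
      exact Typ.lam (ih hM)

theorem typ_subst {Γ : Ctx} {M N B} {k : ℕ} {As : List Ty}
    (h : Typ (insertAtC k As Γ) M B) (hN : ∀ A ∈ As, Typ Γ N A) :
    Typ Γ (subst k N M) B := by
  generalize hΔ : insertAtC k As Γ = Δ at h
  induction h generalizing Γ k N with
  | @var Δ n A hmem =>
    subst hΔ
    simp only [subst]
    split_ifs with h1 h2
    · subst h1
      apply hN
      rwa [insertAtC_self] at hmem
    · refine Typ.var ?_
      rwa [insertAtC_gt As Γ (by omega)] at hmem
    · refine Typ.var ?_
      rwa [insertAtC_lt As Γ (by omega)] at hmem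
  | app hM hargs ihM ihargs =>
    exact Typ.app (ihM hN hΔ) fun A hA => ihargs A hA hN hΔ
  | @lam Δ M Cs B hM ih =>
    subst hΔ
    simp only [subst]
    refine Typ.lam ?_
    refine ih (N := lift 0 N) (k := k + 1) (Γ := consC Cs Γ) ?_ ?_
    · intro A hA
      have := typ_lift (Γ := Γ) (M := N) (A := A) (hN A hA) 0 Cs
      rwa [insertAtC_zero] at this
    · rw [consC_insertAtC]

theorem typ_combine {Γ : Ctx} {M N : Lam} {k : ℕ} (Cs : List Ty)
    (h : ∀ C ∈ Cs, ∃ As : List Ty,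
        Typ (insertAtC k As Γ) M C ∧ ∀ A ∈ As, Typ Γ N A) :
    ∃ As : List Ty, (∀ C ∈ Cs, Typ (insertAtC k As Γ) M C) ∧
      ∀ A ∈ As, Typ Γ N A := by
  induction Cs with
  | nil => exact ⟨[], by simp, by simp⟩
  | cons C Cs ih =>
    obtain ⟨AsC, hC, hNC⟩ := h C (by simp)
    obtain ⟨AsR, hR, hNR⟩ := ih fun C hC => h C (List.mem_cons_of_mem _ hC)
    have hsub1 : ∀ n, insertAtC k AsC Γ n ⊆ insertAtC k (AsC ++ AsR) Γ n := by
      intro n x hx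
      simp only [insertAtC] at hx ⊢
      split_ifs at hx ⊢ <;> simp_all
    have hsub2 : ∀ n, insertAtC k AsR Γ n ⊆ insertAtC k (AsC ++ AsR) Γ n := by
      intro n x hx
      simp only [insertAtC] at hx ⊢
      split_ifs at hx ⊢ <;> simp_all
    refine ⟨AsC ++ AsR, ?_, ?_⟩
    · intro C' hC'
      rcases List.mem_cons.1 hC' with rfl | hC'
      · exact typ_mono hsub1 hC
      · exact typ_mono hsub2 (hR C' hC')
    · intro A hA
      rcases List.mem_append.1 hA with hA | hA
      · exact hNC A hA
      · exact hNR A hA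

theorem typ_anti_subst {Γ : Ctx} {N : Lam} {k : ℕ} {A : Ty} (M : Lam)
    (h : Typ Γ (subst k N M) A) :
    ∃ As : List Ty, Typ (insertAtC k As Γ) M A ∧ ∀ A' ∈ As, Typ Γ N A' := by
  induction M generalizing Γ A k N with
  | var n =>
    simp only [subst] at h
    split_ifs at h with h1 h2
    · subst h1
      refine ⟨[A], Typ.var ?_, by simpa using h⟩
      rw [insertAtC_self]
      simp
    · cases h with
      | var hmem =>
        refine ⟨[], Typ.var ?_, by simp⟩
        rw [insertAtC_gt [] Γ (by omega)]
        exact hmem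
    · cases h with
      | var hmem =>
        refine ⟨[], Typ.var ?_, by simp⟩
        rw [insertAtC_lt [] Γ (by omega)]
        exact hmem
  | app P Q ihP ihQ =>
    simp only [subst] at h
    cases h with
    | @app _ _ _ Cs B hM hargs =>
      obtain ⟨As₁, hP1, hN1⟩ := ihP hM
      obtain ⟨As₂, hQ2, hN2⟩ := typ_combine Cs fun C hC => ihQ (hargs C hC)
      have hsub1 : ∀ n, insertAtC k As₁ Γ n ⊆ insertAtC k (As₁ ++ As₂) Γ n := by
        intro n x hx
        simp only [insertAtC] at hx ⊢
        split_ifs at hx ⊢ <;> simp_all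
      have hsub2 : ∀ n, insertAtC k As₂ Γ n ⊆ insertAtC k (As₁ ++ As₂) Γ n := by
        intro n x hx
        simp only [insertAtC] at hx ⊢
        split_ifs at hx ⊢ <;> simp_all
      refine ⟨As₁ ++ As₂, Typ.app (typ_mono hsub1 hP1)
        (fun C hC => typ_mono hsub2 (hQ2 C hC)), ?_⟩
      intro A' hA'
      rcases List.mem_append.1 hA' with hA' | hA'
      · exact hN1 A' hA'
      · exact hN2 A' hA'
  | lam P ih =>
    simp only [subst] at h
    cases h with
    | @lam _ _ Cs B hM =>
      obtain ⟨As, hP, hN⟩ := ih hM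
      refine ⟨As, ?_, ?_⟩
      · rw [← consC_insertAtC] at hP
        exact Typ.lam hP
      · intro A' hA'
        have := hN A' hA'
        have h0 : Typ (insertAtC 0 Cs Γ) (lift 0 N) A' := by
          rwa [insertAtC_zero]
        exact typ_anti_lift h0

theorem subj_red {M N : Lam} (hstep : Beta M N) :
    ∀ {Γ : Ctx} {A : Ty}, Typ Γ M A → Typ Γ N A := by
  induction hstep with
  | beta U V =>
    intro Γ A h
    cases h with
    | @app _ _ _ As B hM hargs =>
      cases hM with
      | lam hU =>
        refine typ_subst (k := 0) (As := As) ?_ hargs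
        rwa [insertAtC_zero]
  | appL N hs ih =>
    intro Γ A h
    cases h with
    | app hM hargs => exact Typ.app (ih hM) hargs
  | appR M hs ih =>
    intro Γ A h
    cases h with
    | app hM hargs => exact Typ.app hM fun A hA => ih (hargs A hA)
  | lam hs ih =>
    intro Γ A h
    cases h with
    | lam hM => exact Typ.lam (ih hM)

theorem subj_exp {M N : Lam} (hstep : Beta M N) :
    ∀ {Γ : Ctx} {A : Ty}, Typ Γ N A → Typ Γ M A := by
  induction hstep with
  | beta U V =>
    intro Γ A h
    obtain ⟨As, hU, hV⟩ := typ_anti_subst U h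
    rw [insertAtC_zero] at hU
    exact Typ.app (Typ.lam hU) hV
  | appL N hs ih =>
    intro Γ A h
    cases h with
    | app hM hargs => exact Typ.app (ih hM) hargs
  | appR M hs ih =>
    intro Γ A h
    cases h with
    | app hM hargs => exact Typ.app hM fun A hA => ih (hargs A hA)
  | lam hs ih =>
    intro Γ A h
    cases h with
    | lam hM => exact Typ.lam (ih hM)

theorem typ_conv {X Y : Lam} (h : BetaConv X Y) {Γ : Ctx} {A : Ty} :
    Typ Γ X A ↔ Typ Γ Y A := by
  induction h with
  | rel _ _ hr => exact ⟨subj_red hr, subj_exp hr⟩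
  | refl _ => exact Iff.rfl
  | symm _ _ _ ih => exact ih.symm
  | trans _ _ _ _ _ ih1 ih2 => exact ih1.trans ih2

theorem typ_appList {Ns : List Lam} {M : Lam} {Γ : Ctx} {A : Ty}
    (h : Typ Γ (appList M Ns) A) : ∃ B, Typ Γ M B := by
  induction Ns generalizing M A with
  | nil => exact ⟨A, h⟩
  | cons N Ns ih =>
    obtain ⟨B, hB⟩ := ih h
    cases hB with
    | app hM hargs => exact ⟨_, hM⟩

theorem typ_iComb (Γ : Ctx) : Typ Γ iComb (Ty.arr [Ty.base] Ty.base) := by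
  refine Typ.lam (Typ.var ?_)
  simp [consC]
-- ### Part D: realizability

def rdTy : Ty → ℕ
  | .base => 0
  | .arr _ B => rdTy B + 1

def kComb : ℕ → Lam
  | 0 => iComb
  | d + 1 => lam (kComb d)

theorem kComb_closed : ∀ d, Closed (kComb d) := by
  intro d
  induction d with
  | zero => show (0 : ℕ) < 1; omega
  | succ d ih => show ClosedUnder 1 (kComb d); exact cu_mono ih (Nat.zero_le 1)

theorem kComb_hn : ∀ d, HN (kComb d)
  | 0 => hn_iComb
  | d + 1 => hn_lam (kComb_hn d)

def interp : Ty → Lam → Prop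
  | .base => fun M => Closed M ∧ HN M
  | .arr As B => fun M => Closed M ∧
      ∀ N : Lam, Closed N → (∀ A ∈ As, interp A N) → interp B (app M N)
termination_by A => sizeOf A
decreasing_by
  all_goals
    (simp only [Ty.arr.sizeOf_spec]
     first
       | omega
       | (rename_i hmem
          have := List.sizeOf_lt_of_mem hmem
          omega))

theorem interp_base {M : Lam} : interp .base M ↔ Closed M ∧ HN M := by
  rw [interp]

theorem interp_arr {As : List Ty} {B : Ty} {M : Lam} :
    interp (.arr As B) M ↔ Closed M ∧
      ∀ N : Lam, Closed N → (∀ A ∈ As, interp A N) → interp B (app M N) := by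
  rw [interp]

theorem interp_closed {A : Ty} {M : Lam} (h : interp A M) : Closed M := by
  cases A with
  | base => exact (interp_base.1 h).1
  | arr As B => exact (interp_arr.1 h).1

theorem interp_expand (A : Ty) {X X' : Lam} (hX : ∀ U, X ≠ lam U) (hc : Closed X)
    (hs : HeadStep X X') (h : interp A X') : interp A X := by
  cases A with
  | base => exact interp_base.2 ⟨hc, hn_expand hs (interp_base.1 h).2⟩
  | arr As B =>
    refine interp_arr.2 ⟨hc, fun N hN hAs => ?_⟩
    have h2 := (interp_arr.1 h).2 N hN hAs
    exact interp_expand B (fun U h => Lam.noConfusion h) ⟨hc, hN⟩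
      (HeadStep.app N hX hs) h2

theorem kComb_interp (A : Ty) : ∀ d, rdTy A ≤ d → interp A (kComb d) := by
  cases A with
  | base =>
    intro d _
    exact interp_base.2 ⟨kComb_closed d, kComb_hn d⟩
  | arr As B =>
    intro d hd
    have hB : rdTy B + 1 ≤ d := hd
    obtain ⟨e, rfl⟩ : ∃ e, d = e + 1 := ⟨d - 1, by omega⟩
    refine interp_arr.2 ⟨kComb_closed (e + 1), fun N hN _ => ?_⟩
    have hstep : HeadStep (app (kComb (e + 1)) N) (kComb e) := by
      have : subst 0 N (kComb e) = kComb e := subst_closed (kComb_closed e) 0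
      conv_rhs => rw [← this]
      exact HeadStep.head _ _
    refine interp_expand B (fun U h => Lam.noConfusion h)
      ⟨kComb_closed (e + 1), hN⟩ hstep ?_
    exact kComb_interp B e (by omega)

theorem le_foldr_max {a : ℕ} {l : List ℕ} (h : a ∈ l) :
    a ≤ l.foldr max 0 := by
  induction l with
  | nil => cases h
  | cons b l ih =>
    rcases List.mem_cons.1 h with rfl | h
    · exact le_max_left _ _
    · exact le_trans (ih h) (le_max_right _ _)

theorem interp_sound (A : Ty) {M : Lam} (h : interp A M) : Closed M ∧ HN M := by
  cases A with
  | base => exact interp_base.1 h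
  | arr As B =>
    refine ⟨(interp_arr.1 h).1, ?_⟩
    set d := (As.map rdTy).foldr max 0 with hd
    have hK : ∀ A ∈ As, interp A (kComb d) := by
      intro A hA
      exact kComb_interp A d (le_foldr_max (List.mem_map_of_mem (f := rdTy) hA))
    have h2 := (interp_arr.1 h).2 (kComb d) (kComb_closed d) hK
    have h3 := (interp_sound B h2).2
    exact hn_app (kComb_closed d) h3

def esubAt : ℕ → List Lam → Lam → Lam
  | _, [], M => M
  | k, N :: ρ, M => esubAt k ρ (subst k N M)

theorem esubAt_closed {k : ℕ} {ρ : List Lam} {M : Lam}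
    (hM : ClosedUnder k M) : esubAt k ρ M = M := by
  induction ρ with
  | nil => rfl
  | cons N ρ ih => simp only [esubAt]; rw [subst_of_cu hM le_rfl, ih]

theorem esubAt_app {k : ℕ} {ρ : List Lam} {A B : Lam} :
    esubAt k ρ (app A B) = app (esubAt k ρ A) (esubAt k ρ B) := by
  induction ρ generalizing A B with
  | nil => rfl
  | cons N ρ ih => simp only [esubAt, subst]; rw [ih]

theorem esubAt_lam {k : ℕ} {ρ : List Lam} (hρ : ∀ X ∈ ρ, Closed X) {M : Lam} :
    esubAt k ρ (lam M) = lam (esubAt (k + 1) ρ M) := by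
  induction ρ generalizing M with
  | nil => rfl
  | cons N ρ ih =>
    simp only [esubAt, subst]
    rw [lift_closed (hρ N (by simp)) 0, ih fun X hX => hρ X (by simp [hX])]

theorem esubAt_var {ρ : List Lam} (hρ : ∀ X ∈ ρ, Closed X) {n : ℕ}
    (hn : n < ρ.length) : esubAt 0 ρ (var n) = ρ.get ⟨n, hn⟩ := by
  induction ρ generalizing n with
  | nil => simp at hn
  | cons N ρ ih =>
    cases n with
    | zero =>
      simp only [esubAt, subst, if_pos rfl]
      exact esubAt_closed (hρ N (by simp))
    | succ n =>
      have : subst 0 N (var (n + 1)) = var n := by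
        simp only [subst]
        rw [if_neg (by omega), if_pos (by omega)]
        norm_num
      simp only [esubAt, this]
      exact ih (fun X hX => hρ X (by simp [hX])) (by simpa using hn)

theorem esubAt_subst {k : ℕ} {ρ : List Lam} (hρ : ∀ X ∈ ρ, Closed X)
    {N : Lam} (hN : Closed N) (M : Lam) :
    subst k N (esubAt (k + 1) ρ M) = esubAt k ρ (subst k N M) := by
  induction ρ generalizing M with
  | nil => rfl
  | cons P ρ ih =>
    simp only [esubAt]
    rw [ih (fun X hX => hρ X (by simp [hX])) (subst (k + 1) P M),
      subst_comm hN (hρ P (by simp)) M le_rfl]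

theorem esubAt_cu {k : ℕ} {ρ : List Lam} (hρ : ∀ X ∈ ρ, Closed X) {M : Lam}
    (hM : ClosedUnder (k + ρ.length) M) : ClosedUnder k (esubAt k ρ M) := by
  induction ρ generalizing M with
  | nil => simpa [esubAt] using hM
  | cons N ρ ih =>
    simp only [esubAt]
    refine ih (fun X hX => hρ X (by simp [hX])) ?_
    refine cu_subst (by omega) ?_ ?_
    · exact cu_mono hM (by simp; omega)
    · exact cu_mono (hρ N (by simp)) (by omega)

theorem adequacy {Γ : Ctx} {M : Lam} {A : Ty} (h : Typ Γ M A) :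
    ∀ ρ : List Lam, (∀ X ∈ ρ, Closed X) →
      (∀ n A', A' ∈ Γ n → ∃ hn : n < ρ.length, interp A' (ρ.get ⟨n, hn⟩)) →
      ClosedUnder ρ.length M → interp A (esubAt 0 ρ M) := by
  induction h with
  | @var Γ n A hmem =>
    intro ρ hρ henv hcu
    obtain ⟨hn, hint⟩ := henv n A hmem
    rwa [esubAt_var hρ hn]
  | @app Γ P Q As B hP hargs ihP ihargs =>
    intro ρ hρ henv hcu
    rw [esubAt_app]
    have h1 := interp_arr.1 (ihP ρ hρ henv hcu.1)
    refine h1.2 (esubAt 0 ρ Q) ?_ ?_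
    · exact esubAt_cu hρ (by simpa using hcu.2)
    · intro A hA
      exact ihargs A hA ρ hρ henv hcu.2
  | @lam Γ P As B hP ih =>
    intro ρ hρ henv hcu
    rw [esubAt_lam hρ]
    have hclam : Closed (lam (esubAt 1 ρ P)) := by
      rw [← esubAt_lam hρ]
      exact esubAt_cu hρ (by simpa using hcu)
    refine interp_arr.2 ⟨hclam, fun N hN hAs => ?_⟩
    have hstep : HeadStep (app (lam (esubAt 1 ρ P)) N) (subst 0 N (esubAt 1 ρ P)) :=
      HeadStep.head _ _
    have heq : subst 0 N (esubAt 1 ρ P) = esubAt 0 (N :: ρ) P := by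
      rw [esubAt_subst hρ hN P]
      rfl
    have hint : interp B (esubAt 0 (N :: ρ) P) := by
      refine ih (N :: ρ) ?_ ?_ ?_
      · intro X hX
        rcases List.mem_cons.1 hX with rfl | hX
        · exact hN
        · exact hρ X hX
      · intro n A' hA'
        cases n with
        | zero => exact ⟨by simp, hAs A' hA'⟩
        | succ n =>
          obtain ⟨hn, hint⟩ := henv n A' hA'
          exact ⟨by simpa using hn, hint⟩
      · exact (show ClosedUnder (ρ.length + 1) P from hcu)
    refine interp_expand B (fun U h => Lam.noConfusion h) ⟨hclam, hN⟩ hstep ?_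
    rwa [heq]

/-- A closed typable term head-normalizes. -/
theorem typ_hn {M : Lam} {A : Ty} (h : Typ (fun _ => []) M A) (hM : Closed M) :
    HN M := by
  have := adequacy h [] (by simp) (by simp) hM
  rw [esubAt_closed (k := 0) hM] at this
  exact (interp_sound A this).2
-- ### Part E: glue

theorem fvBound_le {k : ℕ} {M : Lam} (h : ClosedUnder k M) : fvBound M ≤ k := by
  induction M generalizing k with
  | var n => have : n < k := h; simp only [fvBound]; omega
  | app A B ihA ihB =>
    simp only [fvBound]
    exact max_le (ihA h.1) (ihB h.2)
  | lam M ih =>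
    simp only [fvBound]
    have := ih (show ClosedUnder (k + 1) M from h)
    omega

theorem close_closed {M : Lam} (h : Closed M) : close M = M := by
  have h0 : fvBound M = 0 := Nat.le_zero.1 (fvBound_le h)
  rw [close, h0]
  rfl

theorem closed_omega : Closed Omega :=
  ⟨⟨Nat.zero_lt_one, Nat.zero_lt_one⟩, ⟨Nat.zero_lt_one, Nat.zero_lt_one⟩⟩

/-- A closed solvable term head-normalizes. -/
theorem solvable_hn {M : Lam} (hM : Closed M) (hs : Solvable M) : HN M := by
  obtain ⟨Ns, hNs, hconv⟩ := hs
  rw [close_closed hM] at hconv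
  have hI : Typ (fun _ => []) iComb (Ty.arr [Ty.base] Ty.base) := typ_iComb _
  have hX : Typ (fun _ => []) (appList M Ns) (Ty.arr [Ty.base] Ty.base) :=
    (typ_conv hconv).2 hI
  obtain ⟨B, hB⟩ := typ_appList hX
  exact typ_hn hB hM

theorem not_solvable_omega : ¬ Solvable Omega := by
  intro hs
  exact not_hn_of_loop headStep_omega (solvable_hn closed_omega hs)

theorem hwb_headStep {M N : Lam} (h : HeadWBeta M N) : HeadStep M N := by
  induction h with
  | head U V hc => exact HeadStep.head U V
  | app N hne hs ih => exact HeadStep.app N hne ih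
  | lam hs ih => exact HeadStep.lam ih

theorem hwb_cu {n : ℕ} {M M' : Lam} (h : HeadWBeta M M') (hc : ClosedUnder n M) :
    ClosedUnder n M' := by
  induction h generalizing n with
  | head U V hcl =>
    have h1 : ClosedUnder 1 U := hcl.1
    have h2 : Closed V := hcl.2
    exact cu_mono (cu_subst le_rfl h1 h2) (Nat.zero_le n)
  | app N hne hs ih => exact ⟨ih hc.1, hc.2⟩
  | lam hs ih => exact ih hc

theorem hwb_wbo {M N : Lam} (h : HeadWBeta M N) : WBO M N := by
  induction h with
  | head U V hc => exact WBO.wbeta U V hc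
  | app N hne hs ih => exact WBO.appL N ih
  | lam hs ih => exact WBO.lam ih

theorem hwb_star_closed {M N : Lam} (h : Relation.ReflTransGen HeadWBeta M N)
    (hc : Closed M) : Closed N := by
  induction h with
  | refl => exact hc
  | tail _ hstep ih => exact hwb_cu hstep ih

theorem exists_terminal {M : Lam} (h : Acc (fun a b => HeadWBeta b a) M) :
    ∃ N, Relation.ReflTransGen HeadWBeta M N ∧ ∀ P, ¬ HeadWBeta N P := by
  induction h with
  | intro X hX ih =>
    by_cases hex : ∃ P, HeadWBeta X P
    · obtain ⟨P, hP⟩ := hex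
      obtain ⟨N, hstar, hterm⟩ := ih P hP
      exact ⟨N, Relation.ReflTransGen.head hP hstar, hterm⟩
    · push_neg at hex
      exact ⟨X, Relation.ReflTransGen.refl, hex⟩

/-- Cofinality of weak βΩ head normal forms. -/
theorem whnf_cofinal (M : Lam) (hM : Closed M) : ∃ N, WHnf N ∧ WBOStar M N := by
  have homega : ¬ Solvable Omega := not_solvable_omega
  by_cases hs : Solvable M
  · have hhn : HN M := solvable_hn hM hs
    have hacc : Acc (fun a b => HeadWBeta b a) M :=
      Subrelation.accessible (fun h => hwb_headStep h) hhn
    obtain ⟨N, hstar, hterm⟩ := exists_terminal hacc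
    have hNc : Closed N := hwb_star_closed hstar hM
    have hwstar : WBOStar M N := Relation.ReflTransGen.mono (fun _ _ h => hwb_wbo h) _ _ hstar
    by_cases hsN : Solvable N
    · exact ⟨N, Or.inr ⟨hsN, fun P hP => hterm P hP⟩, hwstar⟩
    · by_cases heq : N = Omega
      · exact ⟨N, Or.inl ⟨hsN, heq⟩, hwstar⟩
      · exact ⟨Omega, Or.inl ⟨homega, rfl⟩,
          hwstar.tail (WBO.womega N hNc hsN heq)⟩
  · by_cases heq : M = Omega
    · exact ⟨M, Or.inl ⟨hs, heq⟩, Relation.ReflTransGen.refl⟩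
    · exact ⟨Omega, Or.inl ⟨homega, rfl⟩,
        Relation.ReflTransGen.single (WBO.womega M hM hs heq)⟩

end Lam
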